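/- Let (𝔘, G, α) be a C*-dynamical system, f: G → ℝ_{>0}, 𝔙 ⊆ 𝔘 a *-subalgebra, and ω a state with lim_i f(g^i)(ω(α_{g^i}(A)B) − ω(α_{g^i}A)ω(B)) = 0 for all A, B ∈ 𝔙 along a net g^i. Then for every n ≥ 2, lim_i f(g^i) κ_n(α_{g^i}A_1, A_2, ..., A_n) = 0 for all A_1,...,A_n ∈ 𝔙, where κ_n is the n-th free cumulant of ω. -/

import Mathlib

open scoped Classical
open Filter Topology

noncomputable section

/-- `π` is a set-partition of the finite set `S ⊆ ℕ`: a collection of nonempty subsets of `S`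
such that every element of `S` lies in exactly one of them. -/
def IsSetPartition (S : Finset ℕ) (π : Finset (Finset ℕ)) : Prop :=
  (∀ V ∈ π, V ⊆ S) ∧ (∀ V ∈ π, V.Nonempty) ∧ ∀ a ∈ S, ∃! V, V ∈ π ∧ a ∈ V

/-- The finset of all set-partitions of `S`. -/
def setPartitions (S : Finset ℕ) : Finset (Finset (Finset ℕ)) :=
  S.powerset.powerset.filter (IsSetPartition S)

/-- A family of blocks is non-crossing if there are no `a < b < c < d` with `a, c` in one
block and `b, d` in a different block. -/
def IsNonCrossing (π : Finset (Finset ℕ)) : Prop :=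
  ¬ ∃ a b c d : ℕ, a < b ∧ b < c ∧ c < d ∧
      ∃ V ∈ π, ∃ W ∈ π, V ≠ W ∧ a ∈ V ∧ c ∈ V ∧ b ∈ W ∧ d ∈ W

/-- The finset of all non-crossing partitions of `S`. -/
def ncPartitions (S : Finset ℕ) : Finset (Finset (Finset ℕ)) :=
  (setPartitions S).filter IsNonCrossing

variable {𝔘 : Type*}

/-- The ordered list `A_{i_1}, …, A_{i_s}` of observables indexed by `V = {i_1 < ⋯ < i_s}`. -/
def blockList (A : ℕ → 𝔘) (V : Finset ℕ) : List 𝔘 :=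
  (V.sort (· ≤ ·)).map A

/-- The ordered product `A_{i_1} ⋯ A_{i_s}` over the block `V = {i_1 < ⋯ < i_s}`. -/
def blockProd [Monoid 𝔘] (A : ℕ → 𝔘) (V : Finset ℕ) : 𝔘 :=
  (blockList A V).prod

/-- The joint classical cumulant of `ω` of the observables `A_i`, `i ∈ S` (order preserved):
`c(S) = ∑_{π ∈ P(S)} (-1)^{|π|-1}(|π|-1)! ∏_{V ∈ π} ω(∏_{i ∈ V} A_i)`. -/
def cumulant [Monoid 𝔘] (ω : 𝔘 → ℂ) (A : ℕ → 𝔘) (S : Finset ℕ) : ℂ :=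
  ∑ π ∈ setPartitions S,
    (-1 : ℂ) ^ (π.card - 1) * ((π.card - 1).factorial : ℂ) * ∏ V ∈ π, ω (blockProd A V)

/-- `κ` (as a function of the ordered list of observables) is the family of free cumulants of
`ω`: it satisfies the moments-to-free-cumulants formula over non-crossing partitions. -/
def IsFreeCumulantFamily [Monoid 𝔘] (ω : 𝔘 → ℂ) (κ : List 𝔘 → ℂ) : Prop :=
  ∀ (A : ℕ → 𝔘) (S : Finset ℕ), S.Nonempty →
    ω (blockProd A S) = ∑ π ∈ ncPartitions S, ∏ V ∈ π, κ (blockList A V)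

/-- A state on a unital C*-algebra: a positive unital linear functional. -/
structure IsState [NormedRing 𝔘] [StarRing 𝔘] [NormedAlgebra ℂ 𝔘] (ω : 𝔘 →ₗ[ℂ] ℂ) : Prop where
  unital : ω 1 = 1
  positive : ∀ a : 𝔘, 0 ≤ (ω (star a * a)).re ∧ (ω (star a * a)).im = 0

/-- `α` is a representation of the group `G` by *-automorphisms. -/
def IsStarAutoRep {G : Type*} [Monoid G] [Ring 𝔘] [Algebra ℂ 𝔘] [StarRing 𝔘]
    (α : G → 𝔘 ≃⋆ₐ[ℂ] 𝔘) : Prop :=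
  ∀ (g h : G) (x : 𝔘), α (g * h) x = α g (α h x)

/-!
Expand `ω(α_g(A₁) A₂ ⋯ Aₙ)` by the moment–free-cumulant formula. The non-crossing partitions
having `{1}` as a block sum to `ω(α_g A₁) ω(A₂ ⋯ Aₙ)` and the one-block partition contributes
`κₙ(α_g A₁, A₂, …, Aₙ)`, so `f(g) κₙ` is `f(g)` times the covariance, which tends to `0`, minus a
finite sum over the remaining partitions. In each of those the block through `1` has between `2`
and `n - 1` elements and its cumulant is the only factor depending on `g`, so strong induction on
that block finishes the proof. The induction runs over arbitrary finite `S ⊆ ℕ` with the moved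
observable at `min S`, so that blocks need no relabelling.
-/

open Finset Function

namespace IsSetPartition

variable {S : Finset ℕ} {π σ : Finset (Finset ℕ)}

lemma eq_of_mem_of_mem (hπ : IsSetPartition S π) {V W : Finset ℕ} (hV : V ∈ π) (hW : W ∈ π)
    {a : ℕ} (haV : a ∈ V) (haW : a ∈ W) : V = W := by
  obtain ⟨U, -, hU⟩ := hπ.2.2 a (hπ.1 V hV haV)
  exact (hU V ⟨hV, haV⟩).trans (hU W ⟨hW, haW⟩).symm

lemma eq_singleton_of_mem (hπ : IsSetPartition S π) (hS : S ∈ π) : π = {S} := by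
  refine eq_singleton_iff_unique_mem.2 ⟨hS, fun V hV => ?_⟩
  obtain ⟨b, hb⟩ := hπ.2.1 V hV
  exact hπ.eq_of_mem_of_mem hV hS hb (hπ.1 V hV hb)

lemma erase_singleton (hπ : IsSetPartition S π) {k : ℕ} (hk : {k} ∈ π) :
    IsSetPartition (S.erase k) (π.erase {k}) := by
  refine ⟨fun V hV b hb => ?_, fun V hV => hπ.2.1 V (mem_of_mem_erase hV), fun b hb => ?_⟩
  · obtain ⟨hVk, hVπ⟩ := mem_erase.1 hV
    refine mem_erase.2 ⟨?_, hπ.1 V hVπ hb⟩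
    rintro rfl
    exact hVk (hπ.eq_of_mem_of_mem hVπ hk hb (mem_singleton_self b))
  · obtain ⟨hbk, hbS⟩ := mem_erase.1 hb
    obtain ⟨V, ⟨hV, hbV⟩, hU⟩ := hπ.2.2 b hbS
    refine ⟨V, ⟨mem_erase.2 ⟨?_, hV⟩, hbV⟩,
      fun W hW => hU W ⟨mem_of_mem_erase hW.1, hW.2⟩⟩
    rintro rfl
    exact hbk (mem_singleton.1 hbV)

lemma insert_singleton {k : ℕ} (hσ : IsSetPartition (S.erase k) σ) (hk : k ∈ S) :
    IsSetPartition S (insert {k} σ) := by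
  refine ⟨?_, ?_, fun b hb => ?_⟩
  · simp only [forall_mem_insert, singleton_subset_iff]
    exact ⟨hk, fun V hV => (hσ.1 V hV).trans (erase_subset k S)⟩
  · simp only [forall_mem_insert, singleton_nonempty, true_and]
    exact hσ.2.1
  · by_cases hbk : b = k
    · subst hbk
      refine ⟨{b}, ⟨mem_insert_self _ _, mem_singleton_self _⟩, fun W ⟨hW, hbW⟩ => ?_⟩
      rcases mem_insert.1 hW with rfl | hW
      · rfl
      · exact absurd (hσ.1 W hW hbW) (notMem_erase b S)
    · obtain ⟨V, ⟨hV, hbV⟩, hU⟩ := hσ.2.2 b (mem_erase.2 ⟨hbk, hb⟩)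
      refine ⟨V, ⟨mem_insert_of_mem hV, hbV⟩, fun W ⟨hW, hbW⟩ => ?_⟩
      rcases mem_insert.1 hW with rfl | hW
      · exact absurd (mem_singleton.1 hbW) hbk
      · exact hU W ⟨hW, hbW⟩

lemma exists_mem_ssubset_two_le_card {k : ℕ} (hπ : IsSetPartition S π) (hk : k ∈ S)
    (hπS : π ≠ {S}) (hkπ : {k} ∉ π) :
    ∃ V ∈ π, k ∈ V ∧ V ⊂ S ∧ 2 ≤ V.card ∧ ∀ W ∈ π.erase V, k ∉ W := by
  obtain ⟨V, ⟨hV, hkV⟩, -⟩ := hπ.2.2 k hk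
  refine ⟨V, hV, hkV, Finset.ssubset_iff_subset_ne.2 ⟨hπ.1 V hV, ?_⟩, ?_, fun W hW hkW => ?_⟩
  · rintro rfl
    exact hπS (hπ.eq_singleton_of_mem hV)
  · by_contra! hcard
    have hV1 : V.card = 1 := by have := card_pos.2 ⟨k, hkV⟩; omega
    obtain ⟨b, rfl⟩ := card_eq_one.1 hV1
    exact hkπ (mem_singleton.1 hkV ▸ hV)
  · exact (mem_erase.1 hW).1 (hπ.eq_of_mem_of_mem (mem_of_mem_erase hW) hV hkW hkV)

end IsSetPartition

lemma IsNonCrossing.mono {π σ : Finset (Finset ℕ)} (hσ : σ ⊆ π) (h : IsNonCrossing π) :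
    IsNonCrossing σ := by
  rintro ⟨a, b, c, d, hab, hbc, hcd, V, hV, W, hW, hVW, haV, hcV, hbW, hdW⟩
  exact h ⟨a, b, c, d, hab, hbc, hcd, V, hσ hV, W, hσ hW, hVW, haV, hcV, hbW, hdW⟩

lemma IsNonCrossing.insert_singleton {σ : Finset (Finset ℕ)} (h : IsNonCrossing σ) (k : ℕ) :
    IsNonCrossing (insert {k} σ) := by
  rintro ⟨a, b, c, d, hab, hbc, hcd, V, hV, W, hW, hVW, haV, hcV, hbW, hdW⟩
  rcases mem_insert.1 hV with rfl | hV
  · rw [mem_singleton] at haV hcV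
    omega
  rcases mem_insert.1 hW with rfl | hW
  · rw [mem_singleton] at hbW hdW
    omega
  exact h ⟨a, b, c, d, hab, hbc, hcd, V, hV, W, hW, hVW, haV, hcV, hbW, hdW⟩

lemma mem_ncPartitions {S : Finset ℕ} {π : Finset (Finset ℕ)} :
    π ∈ ncPartitions S ↔ IsSetPartition S π ∧ IsNonCrossing π := by
  rw [ncPartitions, setPartitions, mem_filter, mem_filter, mem_powerset]
  exact ⟨fun h => ⟨h.1.2, h.2⟩,
    fun h => ⟨⟨fun V hV => mem_powerset.2 (h.1.1 V hV), h.1⟩, h.2⟩⟩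

lemma singleton_mem_ncPartitions {S : Finset ℕ} (hS : S.Nonempty) : {S} ∈ ncPartitions S := by
  refine mem_ncPartitions.2
    ⟨⟨by simp, by simpa using hS, fun a ha => ⟨S, by simpa using ha, ?_⟩⟩, ?_⟩
  · exact fun V hV => mem_singleton.1 hV.1
  · rintro ⟨-, -, -, -, -, -, -, V, hV, W, hW, hVW, -⟩
    exact hVW ((mem_singleton.1 hV).trans (mem_singleton.1 hW).symm)

lemma ncPartitions_singleton (k : ℕ) : ncPartitions {k} = {{{k}}} := by
  refine eq_singleton_iff_unique_mem.2
    ⟨singleton_mem_ncPartitions (singleton_nonempty k), fun π hπ => ?_⟩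
  obtain ⟨hπ, -⟩ := mem_ncPartitions.1 hπ
  obtain ⟨V, ⟨hV, -⟩, -⟩ := hπ.2.2 k (mem_singleton_self k)
  have hVk : V = {k} := (hπ.2.1 V hV).subset_singleton_iff.1 (hπ.1 V hV)
  exact hπ.eq_singleton_of_mem (hVk ▸ hV)

/-- Deleting the block `{k}` is a bijection from the non-crossing partitions of `S` having `{k}`
as a block onto the non-crossing partitions of `S \ {k}`. -/
lemma sum_filter_singleton_mem_ncPartitions {R : Type*} [CommSemiring R] {S : Finset ℕ} {k : ℕ}
    (hk : k ∈ S) (F : Finset ℕ → R) :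
    ∑ π ∈ (ncPartitions S).filter ({k} ∈ ·), ∏ V ∈ π, F V
      = F {k} * ∑ σ ∈ ncPartitions (S.erase k), ∏ V ∈ σ, F V := by
  have hkσ : ∀ σ ∈ ncPartitions (S.erase k), {k} ∉ σ := fun σ hσ h =>
    notMem_erase k S ((mem_ncPartitions.1 hσ).1.1 _ h (mem_singleton_self k))
  rw [mul_sum]
  refine sum_nbij' (fun π => π.erase {k}) (insert {k}) (fun π hπ => ?_) (fun σ hσ => ?_)
    (fun π hπ => insert_erase (mem_filter.1 hπ).2) (fun σ hσ => erase_insert (hkσ σ hσ))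
    (fun π hπ => (mul_prod_erase π F (mem_filter.1 hπ).2).symm)
  · obtain ⟨hπ, hkπ⟩ := mem_filter.1 hπ
    obtain ⟨hπ, hnc⟩ := mem_ncPartitions.1 hπ
    exact mem_ncPartitions.2 ⟨hπ.erase_singleton hkπ, hnc.mono (erase_subset _ _)⟩
  · obtain ⟨hσ, hnc⟩ := mem_ncPartitions.1 hσ
    exact mem_filter.2 ⟨mem_ncPartitions.2 ⟨hσ.insert_singleton hk, hnc.insert_singleton k⟩,
      mem_insert_self _ _⟩

section blocks

variable (A : ℕ → 𝔘) (x : 𝔘) {k : ℕ}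

lemma blockList_update_of_notMem {V : Finset ℕ} (hk : k ∉ V) :
    blockList (update A k x) V = blockList A V :=
  List.map_congr_left fun _ hj => update_of_ne (ne_of_mem_of_not_mem ((mem_sort _).1 hj) hk) _ _

lemma blockList_update_of_forall_le {S : Finset ℕ} (hk : k ∈ S) (hmin : ∀ j ∈ S, k ≤ j) :
    blockList (update A k x) S = x :: blockList A (S.erase k) := by
  have hsort : S.sort (· ≤ ·) = k :: (S.erase k).sort (· ≤ ·) := by
    conv_lhs => rw [← insert_erase hk]
    exact sort_insert _ (fun j hj => hmin j (mem_of_mem_erase hj)) (notMem_erase k S)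
  rw [← blockList_update_of_notMem A x (notMem_erase k S)]
  simp only [blockList, hsort, List.map_cons, update_self]

lemma blockProd_update_of_forall_le [Monoid 𝔘] {S : Finset ℕ} (hk : k ∈ S)
    (hmin : ∀ j ∈ S, k ≤ j) : blockProd (update A k x) S = x * blockProd A (S.erase k) := by
  rw [blockProd, blockList_update_of_forall_le A x hk hmin, List.prod_cons, blockProd]

lemma prod_blockList_update {R : Type*} [CommMonoid R] (F : List 𝔘 → R)
    {π : Finset (Finset ℕ)} {V : Finset ℕ} (hV : V ∈ π) (hk : ∀ W ∈ π.erase V, k ∉ W) :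
    ∏ W ∈ π, F (blockList (update A k x) W)
      = F (blockList (update A k x) V) * ∏ W ∈ π.erase V, F (blockList A W) := by
  rw [← mul_prod_erase π _ hV]
  congr 1
  exact prod_congr rfl fun W hW => by rw [blockList_update_of_notMem A x (hk W hW)]

end blocks

namespace IsFreeCumulantFamily

variable [Monoid 𝔘] {ω : 𝔘 → ℂ} {κ : List 𝔘 → ℂ}

lemma apply_singleton (hκ : IsFreeCumulantFamily ω κ) (x : 𝔘) : κ [x] = ω x := by
  simpa [ncPartitions_singleton, blockProd, blockList] using
    (hκ (fun _ => x) {0} (singleton_nonempty 0)).symm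

lemma apply_update_eq (hκ : IsFreeCumulantFamily ω κ) (A : ℕ → 𝔘) (x : 𝔘) {S : Finset ℕ}
    {k : ℕ} (hk : k ∈ S) (hmin : ∀ j ∈ S, k ≤ j) (hS : (S.erase k).Nonempty) :
    κ (blockList (update A k x) S)
      = ω (x * blockProd A (S.erase k)) - ω x * ω (blockProd A (S.erase k))
        - ∑ π ∈ ((ncPartitions S).filter ({k} ∉ ·)).erase {S},
            ∏ V ∈ π, κ (blockList (update A k x) V) := by
  have hfull : {S} ∈ (ncPartitions S).filter ({k} ∉ ·) := by
    refine mem_filter.2 ⟨singleton_mem_ncPartitions ⟨k, hk⟩, fun h => ?_⟩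
    rw [← mem_singleton.1 h, erase_singleton] at hS
    exact not_nonempty_empty hS
  have hsingle : ∑ π ∈ (ncPartitions S).filter ({k} ∈ ·),
      ∏ V ∈ π, κ (blockList (update A k x) V) = ω x * ω (blockProd A (S.erase k)) := by
    have hx : blockList (update A k x) {k} = [x] := by simp [blockList]
    rw [sum_filter_singleton_mem_ncPartitions hk, ← hκ _ _ hS, hx, hκ.apply_singleton,
      blockProd, blockList_update_of_notMem A x (notMem_erase k S), blockProd]
  have hmoment := hκ (update A k x) S ⟨k, hk⟩
  rw [← sum_filter_add_sum_filter_not _ ({k} ∈ ·), hsingle, ← add_sum_erase _ _ hfull,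
    prod_singleton, blockProd_update_of_forall_le A x hk hmin] at hmoment
  linear_combination -hmoment

theorem tendsto_mul_apply_update {ι : Type*} (hκ : IsFreeCumulantFamily ω κ) {l : Filter ι}
    (c : ι → ℂ) (x : ι → 𝔘) (A : ℕ → 𝔘) (k : ℕ)
    (hcov : ∀ T : Finset ℕ, Tendsto
      (fun i => c i * (ω (x i * blockProd A T) - ω (x i) * ω (blockProd A T))) l (𝓝 0))
    (S : Finset ℕ) (hk : k ∈ S) (hmin : ∀ j ∈ S, k ≤ j) (hS : 2 ≤ S.card) :
    Tendsto (fun i => c i * κ (blockList (update A k (x i)) S)) l (𝓝 0) := by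
  induction S using Finset.strongInduction with
  | H S ih =>
  have hS' : (S.erase k).Nonempty := by
    rw [← card_pos, card_erase_of_mem hk]
    omega
  have hrest : Tendsto (fun i => ∑ π ∈ ((ncPartitions S).filter ({k} ∉ ·)).erase {S},
      c i * ∏ V ∈ π, κ (blockList (update A k (x i)) V)) l (𝓝 0) := by
    rw [← sum_const_zero (s := ((ncPartitions S).filter ({k} ∉ ·)).erase {S})]
    refine tendsto_finsetSum _ fun π hπ => ?_
    obtain ⟨hπS, hπ⟩ := mem_erase.1 hπ
    obtain ⟨hπ, hkπ⟩ := mem_filter.1 hπ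
    obtain ⟨V, hV, hkV, hVS, hVcard, hkW⟩ :=
      (mem_ncPartitions.1 hπ).1.exists_mem_ssubset_two_le_card hk hπS hkπ
    have hblock := (ih V hVS hkV (fun j hj => hmin j (hVS.subset hj)) hVcard).mul_const
      (∏ W ∈ π.erase V, κ (blockList A W))
    rw [zero_mul] at hblock
    refine hblock.congr fun i => ?_
    rw [prod_blockList_update A (x i) κ hV hkW, mul_assoc]
  have hdiff := (hcov (S.erase k)).sub hrest
  rw [sub_zero] at hdiff
  refine hdiff.congr fun i => ?_
  rw [hκ.apply_update_eq A (x i) hk hmin hS', mul_sub _ _ (∑ _ ∈ _, _), mul_sum]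

end IsFreeCumulantFamily

theorem free_cumulant_rate_of_decay_general {G ι : Type*}
    [NormedRing 𝔘] [StarRing 𝔘] [NormedAlgebra ℂ 𝔘] [StarModule ℂ 𝔘]
    (α : G → 𝔘 ≃⋆ₐ[ℂ] 𝔘)
    (ω : 𝔘 →ₗ[ℂ] ℂ)
    (l : Filter ι) (g : ι → G)
    (κ : List 𝔘 → ℂ) (hκ : IsFreeCumulantFamily ⇑ω κ)
    (𝔙 : StarSubalgebra ℂ 𝔘) (f : G → ℝ)
    (hcl : ∀ A ∈ 𝔙, ∀ B ∈ 𝔙, Filter.Tendsto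
      (fun i => (f (g i) : ℂ) * (ω (α (g i) A * B) - ω (α (g i) A) * ω B)) l (𝓝 0)) :
    ∀ n, 2 ≤ n → ∀ A : ℕ → 𝔘, (∀ j, A j ∈ 𝔙) →
      Filter.Tendsto
        (fun i => (f (g i) : ℂ) *
          κ (blockList (Function.update A 1 (α (g i) (A 1))) (Finset.Icc 1 n)))
        l (𝓝 0) := by
  intro n hn A hA
  have hprod : ∀ T, blockProd A T ∈ 𝔙 := fun T =>
    list_prod_mem fun y hy => by
      obtain ⟨j, -, rfl⟩ := List.mem_map.1 hy
      exact hA j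
  refine hκ.tendsto_mul_apply_update _ _ A 1 (fun T => hcl _ (hA 1) _ (hprod T)) _
    (mem_Icc.2 ⟨le_rfl, by omega⟩) (fun j hj => (mem_Icc.1 hj).1) ?_
  simpa using hn

/-- if the covariance is f(g)-clustering on a *-subalgebra 𝔙, then all higher
free cumulants of elements of 𝔙 decay at least at the rate 1/f along the net. -/
theorem free_cumulant_rate_of_decay {G ι : Type*} [Group G] [TopologicalSpace G] [IsTopologicalGroup G]
    [LocallyCompactSpace G]
    [NormedRing 𝔘] [StarRing 𝔘] [CStarRing 𝔘] [NormedAlgebra ℂ 𝔘] [StarModule ℂ 𝔘]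
    [CompleteSpace 𝔘]
    (α : G → 𝔘 ≃⋆ₐ[ℂ] 𝔘) (hα : IsStarAutoRep α)
    (ω : 𝔘 →ₗ[ℂ] ℂ) (hω : IsState ω)
    (l : Filter ι) (g : ι → G)
    (κ : List 𝔘 → ℂ) (hκ : IsFreeCumulantFamily ⇑ω κ)
    (𝔙 : StarSubalgebra ℂ 𝔘) (f : G → ℝ) (hf : ∀ x : G, 0 < f x)
    (hcl : ∀ A ∈ 𝔙, ∀ B ∈ 𝔙, Filter.Tendsto
      (fun i => (f (g i) : ℂ) * (ω (α (g i) A * B) - ω (α (g i) A) * ω B)) l (𝓝 0)) :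
    ∀ n, 2 ≤ n → ∀ A : ℕ → 𝔘, (∀ j, A j ∈ 𝔙) →
      Filter.Tendsto
        (fun i => (f (g i) : ℂ) *
          κ (blockList (Function.update A 1 (α (g i) (A 1))) (Finset.Icc 1 n)))
        l (𝓝 0) :=
  free_cumulant_rate_of_decay_general α ω l g κ hκ 𝔙 f hcl
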